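/- arXiv:2507.03195 — 4 statements merged into one kernel-verified Lean document; each statement's English description precedes it below -/
import Mathlib

section
/- Let Γ be a countable group, let Γ ↷ᵃ (X, μ) be a p.m.p. action, and let G be a Polish group. The formulas c(x)(β)(α) = θ(β⁻¹, (α⁻¹)ᵃ·x) and θ(γ, x) = c(x)(γ⁻¹)(e) define mutually inverse bijections between measurable cochains θ : Γ × X → G and measurable t-equivariant maps c : X → C¹(Γ, G^Γ). Moreover, under this correspondence, θ is a cocycle (i.e., θ(γ₁γ₂, x) = θ(γ₁, γ₂·x)·θ(γ₂, x) for all γ₁, γ₂ ∈ Γ and μ-almost every x) if and only if c(x) ∈ Z¹(Γ, G^Γ) for μ-almost every x. -/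
/-!
Parts (i) and (ii) are unfolding of definitions: `t`-equivariance says
`c(x)(β)(α) = c((α⁻¹)ᵃ·x)(β)(e)`. For (iii), `∂c(x)(α, β)(γ) = e` is the cocycle identity for
the pair `(β⁻¹, α⁻¹)` at the point `(γ⁻¹)ᵃ·x`, so `c(x) ∈ Z¹` means that `θ` is a cocycle along
the whole orbit of `x`. As `Γ` is countable and acts by measure-preserving maps, holding for
almost every point and holding along the orbit of almost every point are equivalent.
-/

open MeasureTheory

namespace Stmt0

/-- A probability-measure-preserving action of a group `Γ` on `(X, μ)`. -/
structure PMPAction (Γ : Type*) [Group Γ] (X : Type*) [MeasurableSpace X]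
    (μ : Measure X) where
  act : Γ → X → X
  measurePreserving : ∀ γ, MeasurePreserving (act γ) μ μ
  act_one : ∀ x, act 1 x = x
  act_mul : ∀ γ₁ γ₂ x, act (γ₁ * γ₂) x = act γ₁ (act γ₂ x)

variable (Γ G : Type*)

/-- `C¹(Γ, G^Γ)`: functions from `Γ` to `G^Γ` (curried). -/
abbrev C1 := Γ → Γ → G

variable [Group Γ] [Group G]

/-- The action `t` of `Γ` on `C¹(Γ, G^Γ)`: `(αᵗ·c)(β)(γ) = c(β)(α⁻¹γ)`. -/
def tAct (α : Γ) (c : C1 Γ G) : C1 Γ G := fun β γ => c β (α⁻¹ * γ)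

/-- The coboundary `∂c(α, β)(γ) = c(αβ)(γ)⁻¹ · c(β)(γα) · c(α)(γ)`. -/
def dC (c : C1 Γ G) : Γ → Γ → Γ → G :=
  fun α β γ => (c (α * β) γ)⁻¹ * c β (γ * α) * c α γ

/-- `Z¹(Γ, G^Γ)`: the set of cocycles, i.e. those `c` with `∂c(α,β)(γ) = e_G` always. -/
def Z1 : Set (C1 Γ G) := {c | ∀ α β γ : Γ, dC Γ G c α β γ = 1}

section Correspondence

variable {Γ G}
variable {X A : Type*} [MeasurableSpace X] {μ : Measure X}

namespace PMPAction

variable (a : PMPAction Γ X μ)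

lemma measurable_act (γ : Γ) : Measurable (a.act γ) := (a.measurePreserving γ).measurable

lemma ae_forall_act_iff [Countable Γ] {p : X → Prop} :
    (∀ᵐ x ∂μ, ∀ γ, p (a.act γ x)) ↔ ∀ᵐ x ∂μ, p x := by
  refine ⟨fun h => h.mono fun x hx => by simpa [a.act_one] using hx 1, fun h => ?_⟩
  exact ae_all_iff.2 fun γ => (a.measurePreserving γ).quasiMeasurePreserving.ae h

end PMPAction

def cochainToMap (a : PMPAction Γ X μ) (θ : Γ → X → A) (x : X) : C1 Γ A :=
  fun β α => θ β⁻¹ (a.act α⁻¹ x)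

variable (a : PMPAction Γ X μ)

lemma measurable_cochainToMap [MeasurableSpace A] {θ : Γ → X → A}
    (hθ : ∀ γ, Measurable (θ γ)) : Measurable (cochainToMap a θ) :=
  measurable_pi_lambda _ fun β => measurable_pi_lambda _ fun α =>
    (hθ β⁻¹).comp (a.measurable_act α⁻¹)

lemma cochainToMap_act (θ : Γ → X → A) (γ : Γ) (x : X) :
    cochainToMap a θ (a.act γ x) = tAct Γ A γ (cochainToMap a θ x) := by
  funext β α
  simp [cochainToMap, tAct, ← a.act_mul]

lemma cochainToMap_inv_one (θ : Γ → X → A) (γ : Γ) (x : X) :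
    cochainToMap a θ x γ⁻¹ 1 = θ γ x := by
  simp [cochainToMap, a.act_one]

lemma apply_eq_apply_act_inv_one {c : X → C1 Γ A}
    (hc : ∀ γ x, c (a.act γ x) = tAct Γ A γ (c x)) (x : X) (β α : Γ) :
    c x β α = c (a.act α⁻¹ x) β 1 := by
  rw [hc]
  simp [tAct]

lemma dC_cochainToMap_eq_one_iff (θ : Γ → X → G) (x : X) (α β γ : Γ) :
    dC Γ G (cochainToMap a θ x) α β γ = 1 ↔
      θ (β⁻¹ * α⁻¹) (a.act γ⁻¹ x) =
        θ β⁻¹ (a.act α⁻¹ (a.act γ⁻¹ x)) * θ α⁻¹ (a.act γ⁻¹ x) := by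
  simp only [dC, cochainToMap, mul_inv_rev, a.act_mul, mul_assoc, inv_mul_eq_one]

lemma cochainToMap_mem_Z1_iff (θ : Γ → X → G) (x : X) :
    cochainToMap a θ x ∈ Z1 Γ G ↔
      ∀ γ γ₁ γ₂, θ (γ₁ * γ₂) (a.act γ x) = θ γ₁ (a.act γ₂ (a.act γ x)) * θ γ₂ (a.act γ x) := by
  refine ⟨fun h γ γ₁ γ₂ => ?_, fun h α β γ => ?_⟩
  · simpa using (dC_cochainToMap_eq_one_iff a θ x γ₂⁻¹ γ₁⁻¹ γ⁻¹).1 (h γ₂⁻¹ γ₁⁻¹ γ⁻¹)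
  · exact (dC_cochainToMap_eq_one_iff a θ x α β γ).2 (h γ⁻¹ β⁻¹ α⁻¹)

end Correspondence

theorem stmt0_general {Γ : Type*} [Group Γ] [Countable Γ]
    {X : Type*} [MeasurableSpace X] {μ : Measure X}
    {G : Type*} [Group G]
    [MeasurableSpace G]
    (a : PMPAction Γ X μ) :
    -- (i) from cochains to equivariant maps
    (∀ θ : Γ → X → G, (∀ γ, Measurable (θ γ)) →
      Measurable (fun x : X => (fun β α : Γ => θ β⁻¹ (a.act α⁻¹ x) : C1 Γ G)) ∧
      (∀ (γ : Γ) (x : X),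
        (fun β α : Γ => θ β⁻¹ (a.act α⁻¹ (a.act γ x))) =
          tAct Γ G γ (fun β α : Γ => θ β⁻¹ (a.act α⁻¹ x))) ∧
      (∀ (γ : Γ) (x : X), (fun β α : Γ => θ β⁻¹ (a.act α⁻¹ x)) γ⁻¹ 1 = θ γ x)) ∧
    -- (ii) from equivariant maps to cochains
    (∀ c : X → C1 Γ G, Measurable c →
      (∀ (γ : Γ) (x : X), c (a.act γ x) = tAct Γ G γ (c x)) →
      (∀ γ : Γ, Measurable (fun x : X => c x γ⁻¹ 1)) ∧
      (∀ (x : X) (β α : Γ), c x β α = c (a.act α⁻¹ x) β⁻¹⁻¹ 1)) ∧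
    -- (iii) cocycles correspond to maps landing a.e. in `Z¹(Γ, G^Γ)`
    (∀ θ : Γ → X → G, (∀ γ, Measurable (θ γ)) →
      ((∀ γ₁ γ₂ : Γ, ∀ᵐ x ∂μ, θ (γ₁ * γ₂) x = θ γ₁ (a.act γ₂ x) * θ γ₂ x) ↔
        (∀ᵐ x ∂μ, (fun β α : Γ => θ β⁻¹ (a.act α⁻¹ x)) ∈ Z1 Γ G))) := by
  refine ⟨fun θ hθ => ⟨measurable_cochainToMap a hθ, cochainToMap_act a θ,
    cochainToMap_inv_one a θ⟩, fun c hc hequiv => ⟨?_, ?_⟩, fun θ _ => ?_⟩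
  · exact fun γ => (measurable_pi_apply 1).comp ((measurable_pi_apply γ⁻¹).comp hc)
  · simpa using apply_eq_apply_act_inv_one a hequiv
  · calc (∀ γ₁ γ₂ : Γ, ∀ᵐ x ∂μ, θ (γ₁ * γ₂) x = θ γ₁ (a.act γ₂ x) * θ γ₂ x)
        ↔ ∀ᵐ x ∂μ, ∀ γ₁ γ₂ : Γ, θ (γ₁ * γ₂) x = θ γ₁ (a.act γ₂ x) * θ γ₂ x := by
          simp only [ae_all_iff]
      _ ↔ ∀ᵐ x ∂μ, ∀ γ γ₁ γ₂ : Γ, θ (γ₁ * γ₂) (a.act γ x) =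
            θ γ₁ (a.act γ₂ (a.act γ x)) * θ γ₂ (a.act γ x) := a.ae_forall_act_iff.symm
      _ ↔ ∀ᵐ x ∂μ, cochainToMap a θ x ∈ Z1 Γ G := by
          simp only [cochainToMap_mem_Z1_iff]

/-- Lemma on the correspondence between cocycles and equivariant maps.
Let `Γ` be a countable group, `Γ ↷ᵃ (X, μ)` a p.m.p. action and `G` a Polish group.  The
formulas `c(x)(β)(α) = θ(β⁻¹, (α⁻¹)ᵃ·x)` and `θ(γ, x) = c(x)(γ⁻¹)(e)` define mutually
inverse bijections between measurable cochains `θ : Γ × X → G` and measurable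
`t`-equivariant maps `c : X → C¹(Γ, G^Γ)`; moreover, under this correspondence `θ` is a
cocycle if and only if `c(x) ∈ Z¹(Γ, G^Γ)` for `μ`-almost every `x`. -/
theorem stmt0 {Γ : Type*} [Group Γ] [Countable Γ]
    {X : Type*} [MeasurableSpace X] {μ : Measure X} [IsProbabilityMeasure μ]
    {G : Type*} [Group G] [TopologicalSpace G] [IsTopologicalGroup G] [PolishSpace G]
    [MeasurableSpace G] [BorelSpace G]
    (a : PMPAction Γ X μ) :
    -- (i) from cochains to equivariant maps
    (∀ θ : Γ → X → G, (∀ γ, Measurable (θ γ)) →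
      Measurable (fun x : X => (fun β α : Γ => θ β⁻¹ (a.act α⁻¹ x) : C1 Γ G)) ∧
      (∀ (γ : Γ) (x : X),
        (fun β α : Γ => θ β⁻¹ (a.act α⁻¹ (a.act γ x))) =
          tAct Γ G γ (fun β α : Γ => θ β⁻¹ (a.act α⁻¹ x))) ∧
      (∀ (γ : Γ) (x : X), (fun β α : Γ => θ β⁻¹ (a.act α⁻¹ x)) γ⁻¹ 1 = θ γ x)) ∧
    -- (ii) from equivariant maps to cochains
    (∀ c : X → C1 Γ G, Measurable c →
      (∀ (γ : Γ) (x : X), c (a.act γ x) = tAct Γ G γ (c x)) →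
      (∀ γ : Γ, Measurable (fun x : X => c x γ⁻¹ 1)) ∧
      (∀ (x : X) (β α : Γ), c x β α = c (a.act α⁻¹ x) β⁻¹⁻¹ 1)) ∧
    -- (iii) cocycles correspond to maps landing a.e. in `Z¹(Γ, G^Γ)`
    (∀ θ : Γ → X → G, (∀ γ, Measurable (θ γ)) →
      ((∀ γ₁ γ₂ : Γ, ∀ᵐ x ∂μ, θ (γ₁ * γ₂) x = θ γ₁ (a.act γ₂ x) * θ γ₂ x) ↔
        (∀ᵐ x ∂μ, (fun β α : Γ => θ β⁻¹ (a.act α⁻¹ x)) ∈ Z1 Γ G))) :=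
  stmt0_general a

end Stmt0
end

section
/- Let Γ be a countable group and G a Polish group. There is an assignment T ↦ r_T of a continuous retraction r_T : C¹(Γ, G^Γ) → Z¹(Γ, G^Γ) (a continuous map restricting to the identity on Z¹(Γ, G^Γ)) to each directed tree T ∈ T(Γ), such that: (1) r_{γᵈ·T}(γᵗ·c) = γᵗ·r_T(c) for all T ∈ T(Γ), c ∈ C¹(Γ, G^Γ), and γ ∈ Γ; and (2) for every α, β ∈ Γ there is a partition of T(Γ) into relatively clopen sets such that r_T(c)(β)(α) = r_{T'}(c)(β)(α) for all c ∈ C¹(Γ, G^Γ) whenever T and T' belong to a common piece of the partition. -/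
/-!
Read `c β α` as a value attached to the step from `α` to `αβ`. For a directed tree `T`, give each
edge of `T` that value, inverted when the edge is traversed against its orientation, and let
`r_T(c)(β)(α)` be the ordered product along a walk of `T` from `α` to `αβ`. Since `T` is acyclic
and reversed edges carry inverse values, this product depends only on the endpoints of the walk;
concatenating walks `γ → γα → γαβ` gives the cocycle identity. A cocycle satisfies
`z β α = φ (αβ) * (φ α)⁻¹` with `φ x = z x 1`, so its products telescope and `r_T z = z`.
Left translation carries walks of `T` to walks of `γᵈ·T`, which gives equivariance. Finally the
path from `α` to `αβ` uses finitely many edges, so `T ↦ r_T(·)(β)(α)` is locally constant, and its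
fibres form the clopen partition.
-/

namespace Stmt1

variable (Γ G : Type*)

/-- `C¹(Γ, G^Γ)`: functions from `Γ` to `G^Γ` (curried). -/
abbrev C1 := Γ → Γ → G

variable [Group Γ] [Group G]

/-- The action `t` of `Γ` on `C¹(Γ, G^Γ)`: `(αᵗ·c)(β)(γ) = c(β)(α⁻¹γ)`. -/
def tAct (α : Γ) (c : C1 Γ G) : C1 Γ G := fun β γ => c β (α⁻¹ * γ)

/-- The coboundary `∂c(α, β)(γ) = c(αβ)(γ)⁻¹ · c(β)(γα) · c(α)(γ)`. -/
def dC (c : C1 Γ G) : Γ → Γ → Γ → G :=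
  fun α β γ => (c (α * β) γ)⁻¹ * c β (γ * α) * c α γ

/-- `Z¹(Γ, G^Γ)`: the set of cocycles. -/
def Z1 : Set (C1 Γ G) := {c | ∀ α β γ : Γ, dC Γ G c α β γ = 1}

/-- The undirected graph on `Γ` underlying a set `F ⊆ Γ × Γ` of directed edges
(given by its indicator function). -/
def graphOf {Γ : Type*} (F : Γ × Γ → Bool) : SimpleGraph Γ where
  Adj a b := a ≠ b ∧ (F (a, b) = true ∨ F (b, a) = true)
  symm := ⟨fun _ _ h => ⟨h.1.symm, h.2.symm⟩⟩
  loopless := ⟨fun _ h => h.1 rfl⟩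

/-- `F` is a directed tree on `Γ`: `F ∩ F̄ = ∅` and the graph `F ∪ F̄` is acyclic and
connected. -/
def IsDirTree {Γ : Type*} (F : Γ × Γ → Bool) : Prop :=
  (∀ q : Γ × Γ, ¬(F q = true ∧ F (q.2, q.1) = true)) ∧ (graphOf F).IsTree

/-- `T(Γ)`: the space of directed trees on `Γ`, topologized by pointwise convergence of
indicator functions. -/
def TreeSpace (Γ : Type*) : Type _ := {F : Γ × Γ → Bool // IsDirTree F}

instance : TopologicalSpace (TreeSpace Γ) :=
  inferInstanceAs (TopologicalSpace {F : Γ × Γ → Bool // IsDirTree F})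

/-- The diagonal action of `Γ` on subsets of `Γ × Γ`. -/
def dAct (γ : Γ) (F : Γ × Γ → Bool) : Γ × Γ → Bool :=
  fun q => F (γ⁻¹ * q.1, γ⁻¹ * q.2)

end Stmt1

namespace SimpleGraph.Walk

variable {V G : Type*} [Group G] {H : SimpleGraph V} (w : V → V → G)

/-- The value of the first step is the rightmost factor, matching
`c (α * β) γ = c β (γ * α) * c α γ` for cocycles. -/
def prodAlong {x y : V} (p : H.Walk x y) : G :=
  (p.darts.reverse.map fun d => w d.fst d.snd).prod

variable {w}

@[simp] lemma prodAlong_nil {x : V} : (nil : H.Walk x x).prodAlong w = 1 := rfl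

@[simp] lemma prodAlong_cons {x v y : V} (h : H.Adj x v) (p : H.Walk v y) :
    (cons h p).prodAlong w = p.prodAlong w * w x v := by
  simp [prodAlong]

@[simp] lemma prodAlong_append {x y z : V} (p : H.Walk x y) (q : H.Walk y z) :
    (p.append q).prodAlong w = q.prodAlong w * p.prodAlong w := by
  simp [prodAlong]

@[simp] lemma prodAlong_copy {x y x' y' : V} (p : H.Walk x y) (hx : x = x') (hy : y = y') :
    (p.copy hx hy).prodAlong w = p.prodAlong w := by
  subst hx hy; rfl

@[simp] lemma prodAlong_transfer {K : SimpleGraph V} {x y : V} (p : H.Walk x y) (hp) :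
    (p.transfer K hp).prodAlong w = p.prodAlong w := by
  induction p with
  | nil => rfl
  | @cons u v _ h p ih =>
    exact (prodAlong_cons _ _).trans <|
      (congrArg (· * w u v) (ih _)).trans (prodAlong_cons h p).symm

lemma prodAlong_map {W : Type*} {K : SimpleGraph W} (f : H →g K) (w : W → W → G) {x y : V}
    (p : H.Walk x y) : (p.map f).prodAlong w = p.prodAlong fun a b => w (f a) (f b) := by
  induction p <;> simp [*]

lemma prodAlong_congr {w' : V → V → G} {x y : V} (p : H.Walk x y)
    (h : ∀ d ∈ p.darts, w d.fst d.snd = w' d.fst d.snd) : p.prodAlong w = p.prodAlong w' := by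
  unfold prodAlong
  congr 1
  exact List.map_congr_left fun d hd => h d (List.mem_reverse.1 hd)

lemma prodAlong_eq_div {φ : V → G} (hw : ∀ a b, H.Adj a b → w a b = φ b * (φ a)⁻¹)
    {x y : V} (p : H.Walk x y) : p.prodAlong w = φ y * (φ x)⁻¹ := by
  induction p with
  | nil => simp
  | cons h p ih => simp [ih, hw _ _ h]

lemma continuous_prodAlong {X : Type*} [TopologicalSpace X] [TopologicalSpace G]
    [ContinuousMul G] {w : X → V → V → G} (hw : ∀ a b, Continuous fun c => w c a b)
    {x y : V} (p : H.Walk x y) : Continuous fun c => p.prodAlong (w c) :=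
  continuous_list_prod _ fun d _ => hw d.fst d.snd

lemma prodAlong_eq_of_isPath (hH : H.IsAcyclic) (hw : ∀ a b, H.Adj a b → w b a = (w a b)⁻¹)
    {x y : V} (p q : H.Walk x y) (hq : q.IsPath) : p.prodAlong w = q.prodAlong w := by
  classical
  have path_eq {u v : V} {p q : H.Walk u v} (hp : p.IsPath) (hq : q.IsPath) : p = q :=
    Subtype.mk.inj <| (hH.subsingleton_path u v).elim ⟨p, hp⟩ ⟨q, hq⟩
  induction p with
  | nil => rw [path_eq hq IsPath.nil]
  | @cons x v y h p ih =>
    set r := p.bypass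
    have hr : r.IsPath := p.bypass_isPath
    rw [prodAlong_cons, ih r hr]
    by_cases hx : x ∈ r.support
    · -- the path from `v` to `y` passes through `x`, so it starts with the edge back to `x`
      have hedge : r.takeUntil x hx = cons h.symm nil :=
        path_eq (hr.takeUntil hx) (IsPath.nil.cons (by simpa using h.ne'))
      rw [← r.take_spec hx, prodAlong_append, hedge, path_eq (hr.dropUntil hx) hq,
        prodAlong_cons, prodAlong_nil, one_mul, hw _ _ h, inv_mul_cancel_right]
    · rw [← prodAlong_cons h, path_eq (hr.cons hx) hq]

lemma prodAlong_eq_of_isAcyclic (hH : H.IsAcyclic) (hw : ∀ a b, H.Adj a b → w b a = (w a b)⁻¹)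
    {x y : V} (p q : H.Walk x y) : p.prodAlong w = q.prodAlong w := by
  classical
  rw [prodAlong_eq_of_isPath hH hw p _ q.bypass_isPath,
    prodAlong_eq_of_isPath hH hw q _ q.bypass_isPath]

end SimpleGraph.Walk

theorem IsLocallyConstant.exists_clopen_partition {X Y : Type*} [TopologicalSpace X] {f : X → Y}
    (hf : IsLocallyConstant f) :
    ∃ P : Set (Set X), (∀ V ∈ P, IsClopen V) ∧ ⋃₀ P = Set.univ ∧ P.PairwiseDisjoint id ∧
      ∀ V ∈ P, ∀ x ∈ V, ∀ y ∈ V, f x = f y := by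
  refine ⟨Set.range fun x => f ⁻¹' {f x}, ?_, ?_, ?_, ?_⟩
  · rintro _ ⟨x, rfl⟩
    exact hf.isClopen_fiber (f x)
  · exact Set.eq_univ_of_forall fun x => ⟨_, ⟨x, rfl⟩, rfl⟩
  · rintro _ ⟨x, rfl⟩ _ ⟨y, rfl⟩ hne
    refine (Set.disjoint_singleton.2 fun hxy => hne ?_).preimage f
    simp only [hxy]
  · rintro _ ⟨z, rfl⟩ x (hx : f x = f z) y (hy : f y = f z)
    rw [hx, hy]

open Topology

namespace Stmt1

lemma eventually_apply_eq {Γ : Type*} (T : TreeSpace Γ) (q : Γ × Γ) :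
    ∀ᶠ T' in 𝓝 T, T'.1 q = T.1 q :=
  ((IsLocallyConstant.iff_continuous _).2
    ((continuous_apply q).comp continuous_subtype_val)).eventually_eq T

variable {Γ G : Type*} [Group Γ] [Group G]

def edgeVal (F : Γ × Γ → Bool) (c : C1 Γ G) (a b : Γ) : G :=
  if F (a, b) then c (a⁻¹ * b) a else (c (b⁻¹ * a) b)⁻¹

lemma edgeVal_swap {F : Γ × Γ → Bool} (hF : ∀ q : Γ × Γ, ¬(F q = true ∧ F (q.2, q.1) = true))
    (c : C1 Γ G) {a b : Γ} (h : (graphOf F).Adj a b) : edgeVal F c b a = (edgeVal F c a b)⁻¹ := by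
  rcases h.2 with hab | hba
  · have hba : F (b, a) = false := by simpa using fun hba => hF (a, b) ⟨hab, hba⟩
    simp [edgeVal, hab, hba]
  · have hab : F (a, b) = false := by simpa using fun hab => hF (a, b) ⟨hab, hba⟩
    simp [edgeVal, hab, hba]

lemma edgeVal_dAct (γ : Γ) (F : Γ × Γ → Bool) (c : C1 Γ G) (a b : Γ) :
    edgeVal (dAct Γ γ F) (tAct Γ G γ c) a b = edgeVal F c (γ⁻¹ * a) (γ⁻¹ * b) := by
  have hab : (γ⁻¹ * a)⁻¹ * (γ⁻¹ * b) = a⁻¹ * b := by group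
  have hba : (γ⁻¹ * b)⁻¹ * (γ⁻¹ * a) = b⁻¹ * a := by group
  unfold edgeVal
  rw [hab, hba]
  rfl

lemma continuous_edgeVal [TopologicalSpace G] [ContinuousInv G] (F : Γ × Γ → Bool) (a b : Γ) :
    Continuous fun c : C1 Γ G => edgeVal F c a b := by
  unfold edgeVal
  split_ifs
  · fun_prop
  · fun_prop

lemma apply_eq_of_mem_Z1 {z : C1 Γ G} (hz : z ∈ Z1 Γ G) (β γ : Γ) :
    z β γ = z (γ * β) 1 * (z γ 1)⁻¹ := by
  have h := hz γ β 1
  simp only [dC, one_mul] at h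
  rw [mul_assoc, inv_mul_eq_one] at h
  rw [h, mul_inv_cancel_right]

lemma edgeVal_of_mem_Z1 (F : Γ × Γ → Bool) {z : C1 Γ G} (hz : z ∈ Z1 Γ G) (a b : Γ) :
    edgeVal F z a b = z b 1 * (z a 1)⁻¹ := by
  unfold edgeVal
  split_ifs
  · rw [apply_eq_of_mem_Z1 hz, mul_inv_cancel_left]
  · rw [apply_eq_of_mem_Z1 hz, mul_inv_cancel_left, mul_inv_rev, inv_inv]

def dActGraphHom (γ : Γ) {F F' : Γ × Γ → Bool} (hF' : F' = dAct Γ γ F) :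
    graphOf F' →g graphOf F where
  toFun a := γ⁻¹ * a
  map_rel' {a b} h := by
    subst hF'
    exact ⟨fun e => h.1 (mul_left_cancel e), h.2⟩

noncomputable def treeRetraction (T : TreeSpace Γ) (c : C1 Γ G) : C1 Γ G :=
  fun β α => (T.2.2.connected.preconnected α (α * β)).some.prodAlong (edgeVal T.1 c)

lemma treeRetraction_apply (T : TreeSpace Γ) (c : C1 Γ G) {α β : Γ}
    (p : (graphOf T.1).Walk α (α * β)) : treeRetraction T c β α = p.prodAlong (edgeVal T.1 c) :=
  SimpleGraph.Walk.prodAlong_eq_of_isAcyclic T.2.2.isAcyclic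
    (fun _ _ => edgeVal_swap T.2.1 c) _ _

lemma treeRetraction_mem_Z1 (T : TreeSpace Γ) (c : C1 Γ G) : treeRetraction T c ∈ Z1 Γ G := by
  intro α β γ
  obtain ⟨p⟩ := T.2.2.connected.preconnected γ (γ * α)
  obtain ⟨q⟩ := T.2.2.connected.preconnected (γ * α) (γ * α * β)
  rw [dC, treeRetraction_apply T c p, treeRetraction_apply T c q,
    treeRetraction_apply T c ((p.append q).copy rfl (mul_assoc γ α β)),
    SimpleGraph.Walk.prodAlong_copy, SimpleGraph.Walk.prodAlong_append]
  group

lemma treeRetraction_of_mem_Z1 (T : TreeSpace Γ) {z : C1 Γ G} (hz : z ∈ Z1 Γ G) :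
    treeRetraction T z = z := by
  funext β α
  obtain ⟨p⟩ := T.2.2.connected.preconnected α (α * β)
  rw [treeRetraction_apply T z p,
    SimpleGraph.Walk.prodAlong_eq_div fun a b _ => edgeVal_of_mem_Z1 T.1 hz a b]
  exact (apply_eq_of_mem_Z1 hz β α).symm

lemma continuous_treeRetraction [TopologicalSpace G] [ContinuousMul G] [ContinuousInv G]
    (T : TreeSpace Γ) :
    Continuous (treeRetraction (G := G) T) :=
  continuous_pi fun _ => continuous_pi fun _ =>
    SimpleGraph.Walk.continuous_prodAlong (continuous_edgeVal T.1) _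

lemma treeRetraction_dAct (γ : Γ) (T T' : TreeSpace Γ) (hT' : T'.1 = dAct Γ γ T.1)
    (c : C1 Γ G) : treeRetraction T' (tAct Γ G γ c) = tAct Γ G γ (treeRetraction T c) := by
  funext β α
  obtain ⟨p⟩ := T'.2.2.connected.preconnected α (α * β)
  rw [treeRetraction_apply T' _ p, tAct,
    treeRetraction_apply T c ((p.map (dActGraphHom γ hT')).copy (u' := γ⁻¹ * α) rfl
      (mul_assoc _ _ _).symm)]
  refine Eq.trans ?_ (SimpleGraph.Walk.prodAlong_copy _ _ _).symm
  refine Eq.trans ?_ (SimpleGraph.Walk.prodAlong_map _ _ p).symm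
  have hval : ∀ a b, edgeVal T'.1 (tAct Γ G γ c) a b = edgeVal T.1 c (γ⁻¹ * a) (γ⁻¹ * b) := by
    rw [hT']
    exact edgeVal_dAct γ T.1 c
  exact SimpleGraph.Walk.prodAlong_congr p fun d _ => hval d.fst d.snd

/-- A walk of `T` from `α` to `αβ` is still a walk of every `T'` that agrees with `T` on its
finitely many edges, and it carries the same edge values there. -/
lemma isLocallyConstant_treeRetraction_apply (α β : Γ) :
    IsLocallyConstant fun (T : TreeSpace Γ) (c : C1 Γ G) => treeRetraction T c β α := by
  rw [IsLocallyConstant.iff_eventually_eq]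
  intro T
  obtain ⟨p⟩ := T.2.2.connected.preconnected α (α * β)
  have hagree : ∀ᶠ T' in 𝓝 T, ∀ d ∈ {d | d ∈ p.darts},
      T'.1 (d.fst, d.snd) = T.1 (d.fst, d.snd) ∧ T'.1 (d.snd, d.fst) = T.1 (d.snd, d.fst) :=
    (Filter.eventually_all_finite p.darts.finite_toSet).2 fun d _ =>
      (eventually_apply_eq T _).and (eventually_apply_eq T _)
  filter_upwards [hagree] with T' hT'
  have hedges : ∀ e ∈ p.edges, e ∈ (graphOf T'.1).edgeSet := by
    simp only [SimpleGraph.Walk.edges, List.mem_map]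
    rintro _ ⟨d, hd, rfl⟩
    have hadj := d.adj
    refine ⟨hadj.1, ?_⟩
    show T'.1 (d.fst, d.snd) = true ∨ T'.1 (d.snd, d.fst) = true
    rw [(hT' d hd).1, (hT' d hd).2]
    exact hadj.2
  funext c
  rw [treeRetraction_apply T' c (p.transfer _ hedges), SimpleGraph.Walk.prodAlong_transfer,
    treeRetraction_apply T c p]
  exact SimpleGraph.Walk.prodAlong_congr p fun d hd => by simp only [edgeVal, (hT' d hd).1]

theorem stmt1_general (Γ G : Type*) [Group Γ] [Group G]
    [TopologicalSpace G] [IsTopologicalGroup G] :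
    ∃ r : TreeSpace Γ → C1 Γ G → C1 Γ G,
      (∀ T : TreeSpace Γ, Continuous (r T)) ∧
      (∀ (T : TreeSpace Γ) (c : C1 Γ G), r T c ∈ Z1 Γ G) ∧
      (∀ (T : TreeSpace Γ), ∀ z ∈ Z1 Γ G, r T z = z) ∧
      (∀ (γ : Γ) (T T' : TreeSpace Γ), T'.1 = dAct Γ γ T.1 →
        ∀ c : C1 Γ G, r T' (tAct Γ G γ c) = tAct Γ G γ (r T c)) ∧
      (∀ α β : Γ, ∃ P : Set (Set (TreeSpace Γ)),
        (∀ V ∈ P, IsClopen V) ∧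
        (⋃₀ P = Set.univ) ∧
        (P.PairwiseDisjoint id) ∧
        (∀ V ∈ P, ∀ T ∈ V, ∀ T' ∈ V, ∀ c : C1 Γ G, r T c β α = r T' c β α)) := by
  refine ⟨treeRetraction, continuous_treeRetraction, treeRetraction_mem_Z1,
    fun T _ => treeRetraction_of_mem_Z1 T, treeRetraction_dAct, fun α β => ?_⟩
  obtain ⟨P, hclopen, hcover, hdisj, hconst⟩ :=
    (isLocallyConstant_treeRetraction_apply (G := G) α β).exists_clopen_partition
  exact ⟨P, hclopen, hcover, hdisj, fun V hV T hT T' hT' => congrFun (hconst V hV T hT T' hT')⟩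

/-- Let `Γ` be a countable group and `G` a Polish group.  There is an
assignment `T ↦ r_T` of a continuous retraction `r_T : C¹(Γ, G^Γ) → Z¹(Γ, G^Γ)` to each
directed tree `T ∈ T(Γ)` such that (1) `r_{γᵈ·T}(γᵗ·c) = γᵗ·r_T(c)` and (2) for every
`α, β ∈ Γ` there is a partition of `T(Γ)` into relatively clopen sets on each piece of
which `T ↦ r_T(c)(β)(α)` is constant, simultaneously for all `c`. -/
theorem stmt1 (Γ G : Type*) [Group Γ] [Countable Γ] [Group G]
    [TopologicalSpace G] [IsTopologicalGroup G] [PolishSpace G] :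
    ∃ r : TreeSpace Γ → C1 Γ G → C1 Γ G,
      (∀ T : TreeSpace Γ, Continuous (r T)) ∧
      (∀ (T : TreeSpace Γ) (c : C1 Γ G), r T c ∈ Z1 Γ G) ∧
      (∀ (T : TreeSpace Γ), ∀ z ∈ Z1 Γ G, r T z = z) ∧
      (∀ (γ : Γ) (T T' : TreeSpace Γ), T'.1 = dAct Γ γ T.1 →
        ∀ c : C1 Γ G, r T' (tAct Γ G γ c) = tAct Γ G γ (r T c)) ∧
      (∀ α β : Γ, ∃ P : Set (Set (TreeSpace Γ)),
        (∀ V ∈ P, IsClopen V) ∧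
        (⋃₀ P = Set.univ) ∧
        (P.PairwiseDisjoint id) ∧
        (∀ V ∈ P, ∀ T ∈ V, ∀ T' ∈ V, ∀ c : C1 Γ G, r T c β α = r T' c β α)) :=
  stmt1_general Γ G

end Stmt1
end

section
/- Let L₁ ⊆ L₂ be first-order languages, let T₂ be an L₂-theory, and let T₁ = T₂|L₁ be the set of L₁-sentences belonging to T₂. If the pair (T₁, T₂) has the relative expansion property, then for every existentially closed model M of T₂, the L₁-reduct M|L₁ is an existentially closed model of T₁. -/
open FirstOrder FirstOrder.Language

universe u v w

namespace Stmt16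

/-- The underlying function of a first-order embedding (structures given explicitly). -/
def embFun {L : FirstOrder.Language.{u, v}} {M : Type w} {N : Type w}
    {SM : L.Structure M} {SN : L.Structure N} (f : @Embedding L M N SM SN) : M → N :=
  (@Embedding.toEmbedding L M N SM SN f).toFun

/-- `M`, equipped with the `L`-structure `SM`, is a model of the theory `T`. -/
def ModelsTheory {L : FirstOrder.Language.{u, v}} (T : L.Theory) (M : Type w)
    (SM : L.Structure M) : Prop :=
  @Theory.Model L M SM T

/-- `M` (with structure `SM`) is an existentially closed model of `T`:  it models `T`, and
for every model `N` of `T` into which `M` embeds, every existential sentence with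
quantifier-free matrix and parameters from `M` that holds in `N` already holds in `M`. -/
def IsEC {L : FirstOrder.Language.{u, v}} (T : L.Theory) (M : Type w) (SM : L.Structure M) : Prop :=
  ModelsTheory T M SM ∧
    ∀ (N : Type w) (SN : L.Structure N), ModelsTheory T N SN →
      ∀ f : @Embedding L M N SM SN,
        ∀ (m n : ℕ) (φ : L.BoundedFormula (Fin m) n), φ.IsQF → ∀ a : Fin m → M,
          (∃ b : Fin n → N, @BoundedFormula.Realize L N SN _ _ φ (fun i => embFun f (a i)) b) →
          ∃ b : Fin n → M, @BoundedFormula.Realize L M SM _ _ φ a b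

/-- The pair `(T₁, T₂)` (where `T₁` is the set of `L₁`-sentences in `T₂`, the inclusion of
languages being given by `φL`) has the relative expansion property: whenever `N ⊨ T₂` and
`M ⊨ T₁` with the `L₁`-reduct of `N` embedding into `M`, there is a model `P` of `T₂`
containing `N` (as `L₂`-structure) whose `L₁`-reduct contains `M`, compatibly. -/
def RelExpansion {L₁ L₂ : FirstOrder.Language.{u, v}} (φL : L₁ →ᴸ L₂) (T₁ : L₁.Theory)
    (T₂ : L₂.Theory) : Prop :=
  ∀ (N : Type w) (SN : L₂.Structure N) (M : Type w) (SM : L₁.Structure M),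
    ModelsTheory T₂ N SN → ModelsTheory T₁ M SM →
    ∀ g : @Embedding L₁ N M (@LHom.reduct L₁ L₂ φL N SN) SM,
      ∃ (P : Type w) (SP : L₂.Structure P), ModelsTheory T₂ P SP ∧
        ∃ (h : @Embedding L₂ N P SN SP)
          (k : @Embedding L₁ M P SM (@LHom.reduct L₁ L₂ φL P SP)),
          ∀ x : N, embFun k (embFun g x) = embFun h x

/-!
Let `N ⊨ T₁` contain `M|L₁` and realize a quantifier-free `L₁`-formula with parameters from
`M`. The relative expansion property puts `M` and `N` together inside some `P ⊨ T₂`;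
quantifier-free formulas persist along embeddings, so `P` realizes the formula read in `L₂`,
and existential closedness of `M` in `T₂` pulls the witnesses back into `M`.
-/

theorem isQF_onBoundedFormula {L₁ L₂ : FirstOrder.Language.{u, v}} (φL : L₁ →ᴸ L₂)
    {α : Type*} {n : ℕ} {φ : L₁.BoundedFormula α n} (h : φ.IsQF) :
    (φL.onBoundedFormula φ).IsQF := by
  induction h with
  | falsum => exact BoundedFormula.IsQF.falsum
  | of_isAtomic hA =>
    cases hA with
    | equal => exact (BoundedFormula.IsAtomic.equal _ _).isQF
    | rel => exact (BoundedFormula.IsAtomic.rel _ _).isQF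
  | imp _ _ ih₁ ih₂ => exact ih₁.imp ih₂

theorem modelsTheory_reduct {L₁ L₂ : FirstOrder.Language.{u, v}} (φL : L₁ →ᴸ L₂)
    {T₁ : L₁.Theory} {T₂ : L₂.Theory} (hT : ∀ σ ∈ T₁, φL.onSentence σ ∈ T₂)
    {M : Type w} {SM : L₂.Structure M} (hM : ModelsTheory T₂ M SM) :
    ModelsTheory T₁ M (@LHom.reduct L₁ L₂ φL M SM) := by
  let _ : L₂.Structure M := SM
  let _ : L₁.Structure M := φL.reduct M
  have : φL.IsExpansionOn M := LHom.isExpansionOn_reduct φL M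
  refine (φL.onTheory_model T₁).mp (Theory.Model.mono hM ?_)
  rintro _ ⟨σ, hσ, rfl⟩
  exact hT σ hσ

theorem exists_realize_of_relExpansion {L₁ L₂ : FirstOrder.Language.{u, v}} (φL : L₁ →ᴸ L₂)
    {T₁ : L₁.Theory} {T₂ : L₂.Theory} (hrel : RelExpansion.{u, v, w} φL T₁ T₂)
    {M : Type w} {SM : L₂.Structure M} (hec : IsEC T₂ M SM)
    {N : Type w} {SN : L₁.Structure N} (hN : ModelsTheory T₁ N SN)
    (f : @Embedding L₁ M N (@LHom.reduct L₁ L₂ φL M SM) SN)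
    {m n : ℕ} {φ : L₁.BoundedFormula (Fin m) n} (hφ : φ.IsQF) {a : Fin m → M}
    (hN_realize : ∃ b : Fin n → N,
      @BoundedFormula.Realize L₁ N SN _ _ φ (fun i => embFun f (a i)) b) :
    ∃ b : Fin n → M,
      @BoundedFormula.Realize L₁ M (@LHom.reduct L₁ L₂ φL M SM) _ _ φ a b := by
  let _ : L₂.Structure M := SM
  obtain ⟨b, hb⟩ := hN_realize
  obtain ⟨P, SP, hP, h, k, hkf⟩ := hrel M SM N SN hec.1 hN f
  let _ : L₂.Structure P := SP
  let _ : L₁.Structure P := φL.reduct P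
  let _ : L₁.Structure M := φL.reduct M
  have : φL.IsExpansionOn P := LHom.isExpansionOn_reduct φL P
  have : φL.IsExpansionOn M := LHom.isExpansionOn_reduct φL M
  have hP_realize : φ.Realize (fun i => embFun h (a i)) (embFun k ∘ b) := by
    have hk : φ.Realize (embFun k ∘ fun i => embFun f (a i)) (embFun k ∘ b) :=
      (hφ.realize_embedding k).mpr hb
    rwa [show (embFun k ∘ fun i => embFun f (a i)) = fun i => embFun h (a i) from
      funext fun i => hkf (a i)] at hk
  obtain ⟨c, hc⟩ := hec.2 P SP hP h m n (φL.onBoundedFormula φ)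
    (isQF_onBoundedFormula φL hφ) a
    ⟨embFun k ∘ b, (φL.realize_onBoundedFormula φ).mpr hP_realize⟩
  exact ⟨c, (φL.realize_onBoundedFormula φ).mp hc⟩

theorem stmt16_general {L₁ L₂ : FirstOrder.Language.{u, v}} (φL : L₁ →ᴸ L₂)
    (T₂ : L₂.Theory) (T₁ : L₁.Theory) (hT₁ : T₁ = {σ : L₁.Sentence | φL.onSentence σ ∈ T₂})
    (hrel : RelExpansion.{u, v, w} φL T₁ T₂)
    (M : Type w) (SM : L₂.Structure M) (hec : IsEC T₂ M SM) :
    IsEC T₁ M (@LHom.reduct L₁ L₂ φL M SM) :=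
  ⟨modelsTheory_reduct φL (fun σ hσ => by rwa [hT₁] at hσ) hec.1,
    fun _ _ hN f _ _ _ hφ _ hN_realize =>
      exists_realize_of_relExpansion φL hrel hec hN f hφ hN_realize⟩

/-- If `L₁ ⊆ L₂` (witnessed by the injective language morphism `φL`),
`T₂` is an `L₂`-theory and `T₁ = T₂|L₁`, and the pair `(T₁, T₂)` has the relative expansion
property, then the `L₁`-reduct of any existentially closed model of `T₂` is an existentially
closed model of `T₁`. -/
theorem stmt16 {L₁ L₂ : FirstOrder.Language.{u, v}} (φL : L₁ →ᴸ L₂) (hφ : φL.Injective)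
    (T₂ : L₂.Theory) (T₁ : L₁.Theory) (hT₁ : T₁ = {σ : L₁.Sentence | φL.onSentence σ ∈ T₂})
    (hrel : RelExpansion.{u, v, w} φL T₁ T₂)
    (M : Type w) (SM : L₂.Structure M) (hec : IsEC T₂ M SM) :
    IsEC T₁ M (@LHom.reduct L₁ L₂ φL M SM) :=
  stmt16_general φL T₂ T₁ hT₁ hrel M SM hec

end Stmt16
end

section
/- Let L be a first-order language that is the union of an increasing sequence (Lₙ)_{n∈ℕ} of sublanguages, let T be an L-theory, and for each n let Tₙ = T|Lₙ be the set of Lₙ-sentences in T. Suppose that for every n the pair (Tₙ, T) has the relative expansion property and the class of existentially closed models of Tₙ is closed under ultraproducts. Then the class of existentially closed models of T is closed under ultraproducts (equivalently, if each Tₙ has a model companion then T has a model companion). -/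
/-!
By the relative expansion property, the `Lₙ`-reduct of an e.c. model of `T` is an e.c. model of
`Tₙ`. Hence the `Lₙ`-reduct of an ultraproduct of e.c. models of `T`, being the ultraproduct of
their reducts, is an e.c. model of `Tₙ` for every `n`. A model of this kind is an e.c. model of
`T`: each axiom of `T` and each quantifier-free formula of `L` involves finitely many symbols,
so it already lives in some `Lₙ`, where the reduct decides it.
-/

open FirstOrder FirstOrder.Language

universe u v w

namespace Stmt17

/-- The underlying function of a first-order embedding (structures given explicitly). -/
def embFun {L : FirstOrder.Language.{u, v}} {M : Type w} {N : Type w}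
    {SM : L.Structure M} {SN : L.Structure N} (f : @Embedding L M N SM SN) : M → N :=
  (@Embedding.toEmbedding L M N SM SN f).toFun

/-- `M`, equipped with the `L`-structure `SM`, is a model of the theory `T`. -/
def ModelsTheory {L : FirstOrder.Language.{u, v}} (T : L.Theory) (M : Type w)
    (SM : L.Structure M) : Prop :=
  @Theory.Model L M SM T

/-- `M` (with structure `SM`) is an existentially closed model of `T`:  it models `T`, and
for every model `N` of `T` into which `M` embeds, every existential sentence with
quantifier-free matrix and parameters from `M` that holds in `N` already holds in `M`. -/
def IsEC {L : FirstOrder.Language.{u, v}} (T : L.Theory) (M : Type w)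
    (SM : L.Structure M) : Prop :=
  ModelsTheory T M SM ∧
    ∀ (N : Type w) (SN : L.Structure N), ModelsTheory T N SN →
      ∀ f : @Embedding L M N SM SN,
        ∀ (m n : ℕ) (φ : L.BoundedFormula (Fin m) n), φ.IsQF → ∀ a : Fin m → M,
          (∃ b : Fin n → N, @BoundedFormula.Realize L N SN _ _ φ (fun i => embFun f (a i)) b) →
          ∃ b : Fin n → M, @BoundedFormula.Realize L M SM _ _ φ a b

/-- The pair `(T', T)` (with `T'` a theory in the sublanguage given by `φL`) has the
relative expansion property. -/
def RelExpansion {L₁ L₂ : FirstOrder.Language.{u, v}} (φL : L₁ →ᴸ L₂) (T₁ : L₁.Theory)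
    (T₂ : L₂.Theory) : Prop :=
  ∀ (N : Type w) (SN : L₂.Structure N) (M : Type w) (SM : L₁.Structure M),
    ModelsTheory T₂ N SN → ModelsTheory T₁ M SM →
    ∀ g : @Embedding L₁ N M (@LHom.reduct L₁ L₂ φL N SN) SM,
      ∃ (P : Type w) (SP : L₂.Structure P), ModelsTheory T₂ P SP ∧
        ∃ (h : @Embedding L₂ N P SN SP)
          (k : @Embedding L₁ M P SM (@LHom.reduct L₁ L₂ φL P SP)),
          ∀ x : N, embFun k (embFun g x) = embFun h x

/-- The class of existentially closed models of `T` is closed under ultraproducts. -/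
def ECClosedUnderUltraproducts {L : FirstOrder.Language.{u, v}} (T : L.Theory) : Prop :=
  ∀ (ι : Type w) (uu : Ultrafilter ι) (Ms : ι → Type w) (SMs : ∀ i, L.Structure (Ms i)),
    (∀ i, IsEC T (Ms i) (SMs i)) →
    IsEC T ((uu : Filter ι).Product Ms)
      (letI : ∀ i, L.Structure (Ms i) := SMs; inferInstance)

open Filter

section QuantifierFree

variable {L₁ L₂ : FirstOrder.Language.{u, v}} (φL : L₁ →ᴸ L₂) {α : Type*}

theorem isQF_onBoundedFormula_iff {n : ℕ} {ψ : L₁.BoundedFormula α n} :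
    (φL.onBoundedFormula ψ).IsQF ↔ ψ.IsQF := by
  refine ⟨fun h => ?_, fun h => ?_⟩
  · induction ψ with
    | falsum => exact BoundedFormula.isQF_bot
    | equal t₁ t₂ => exact (BoundedFormula.IsAtomic.equal _ _).isQF
    | rel R ts => exact (BoundedFormula.IsAtomic.rel _ _).isQF
    | imp ψ₁ ψ₂ ih₁ ih₂ =>
      cases h with
      | of_isAtomic h => cases h
      | imp h₁ h₂ => exact (ih₁ h₁).imp (ih₂ h₂)
    | all ψ _ => cases h with
      | of_isAtomic h => cases h
  · induction h with
    | falsum => exact BoundedFormula.IsQF.falsum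
    | of_isAtomic h =>
      cases h with
      | equal t₁ t₂ => exact (BoundedFormula.IsAtomic.equal _ _).isQF
      | rel R ts => exact (BoundedFormula.IsAtomic.rel _ _).isQF
    | imp _ _ ih₁ ih₂ => exact ih₁.imp ih₂

end QuantifierFree

section Reduct

variable {L₁ L₂ : FirstOrder.Language.{u, v}} (φL : L₁ →ᴸ L₂)

def reductEmbedding {M N : Type w} {SM : L₂.Structure M} {SN : L₂.Structure N}
    (f : @Embedding L₂ M N SM SN) : @Embedding L₁ M N (φL.reduct M) (φL.reduct N) :=
  letI := SM; letI := SN; letI := φL.reduct M; letI := φL.reduct N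
  { toEmbedding := f.toEmbedding
    map_fun' := fun g x => f.map_fun (φL.onFunction g) x
    map_rel' := fun r x => f.map_rel (φL.onRelation r) x }

variable {φL} {T₁ : L₁.Theory} {T₂ : L₂.Theory}

theorem modelsTheory_reduct (hT : T₁ ⊆ φL.onSentence ⁻¹' T₂) {N : Type w}
    {SN : L₂.Structure N} (h : ModelsTheory T₂ N SN) : ModelsTheory T₁ N (φL.reduct N) := by
  let := SN; let := φL.reduct N
  exact ⟨fun σ hσ => (φL.realize_onSentence N σ).mp (h.realize_of_mem _ (hT hσ))⟩

/-- Expand an extension `P` of `M|L₁` to a model `Q ⊇ M` of `T₂`; a witness in `P` stays one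
in `Q` (quantifier-free formulas are preserved by embeddings), and `M` is e.c. in `Q`. -/
theorem isEC_reduct (hT : T₁ ⊆ φL.onSentence ⁻¹' T₂) (hrel : RelExpansion.{u, v, w} φL T₁ T₂)
    {M : Type w} {SM : L₂.Structure M} (h : IsEC T₂ M SM) : IsEC T₁ M (φL.reduct M) := by
  refine ⟨modelsTheory_reduct hT h.1, fun P SP hP g m k ψ hψ a ⟨b, hb⟩ => ?_⟩
  obtain ⟨Q, SQ, hQ, e, k', hcomm⟩ := hrel M SM P SP h.1 hP g
  let := SM; let := SQ; let := φL.reduct Q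
  have hbQ : ψ.Realize (fun i => embFun e (a i)) (fun i => embFun k' (b i)) := by
    have := (hψ.realize_embedding k' (v := fun i => embFun g (a i)) (xs := b)).mpr hb
    rwa [show (k' ∘ fun i => embFun g (a i)) = fun i => embFun e (a i) from
      funext fun i => hcomm (a i)] at this
  obtain ⟨c, hc⟩ := h.2 Q SQ hQ e m k (φL.onBoundedFormula ψ)
    ((isQF_onBoundedFormula_iff φL).mpr hψ) a ⟨_, (φL.realize_onBoundedFormula ψ).mpr hbQ⟩
  let := φL.reduct M
  exact ⟨c, (φL.realize_onBoundedFormula ψ).mp hc⟩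

end Reduct

section Union

variable {ι : Type*} {L : FirstOrder.Language.{u, v}} {Ln : ι → FirstOrder.Language.{u, v}}
  {incl : ∀ i, Ln i →ᴸ L} {l : Filter ι}

theorem eventually_mem_range_onTerm
    (hF : ∀ k (f : L.Functions k), ∀ᶠ i in l, f ∈ Set.range ((incl i).onFunction (n := k)))
    {β : Type*} (t : L.Term β) : ∀ᶠ i in l, t ∈ Set.range (incl i).onTerm := by
  induction t with
  | var x => exact Eventually.of_forall fun i => ⟨Term.var x, rfl⟩
  | func f ts ih =>
    filter_upwards [hF _ f, eventually_all.2 ih] with i ⟨g, hg⟩ hts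
    choose s hs using hts
    exact ⟨Term.func g s, by simp only [LHom.onTerm, hg, hs]⟩

theorem eventually_mem_range_onBoundedFormula
    (hF : ∀ k (f : L.Functions k), ∀ᶠ i in l, f ∈ Set.range ((incl i).onFunction (n := k)))
    (hR : ∀ k (r : L.Relations k), ∀ᶠ i in l, r ∈ Set.range ((incl i).onRelation (n := k)))
    {β : Type*} {n : ℕ} (φ : L.BoundedFormula β n) :
    ∀ᶠ i in l, φ ∈ Set.range (incl i).onBoundedFormula := by
  induction φ with
  | falsum => exact Eventually.of_forall fun i => ⟨BoundedFormula.falsum, rfl⟩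
  | equal t₁ t₂ =>
    filter_upwards [eventually_mem_range_onTerm hF t₁, eventually_mem_range_onTerm hF t₂]
      with i ⟨s₁, hs₁⟩ ⟨s₂, hs₂⟩
    exact ⟨BoundedFormula.equal s₁ s₂, by simp only [LHom.onBoundedFormula, hs₁, hs₂]; rfl⟩
  | rel R ts =>
    filter_upwards [hR _ R, eventually_all.2 fun j => eventually_mem_range_onTerm hF (ts j)]
      with i ⟨r, hr⟩ hts
    choose s hs using hts
    exact ⟨BoundedFormula.rel r s, by simp only [LHom.onBoundedFormula, hr, Function.comp_def, hs]; rfl⟩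
  | imp φ₁ φ₂ ih₁ ih₂ =>
    filter_upwards [ih₁, ih₂] with i ⟨ψ₁, hψ₁⟩ ⟨ψ₂, hψ₂⟩
    exact ⟨ψ₁.imp ψ₂, by simp only [LHom.onBoundedFormula, hψ₁, hψ₂]⟩
  | all φ ih =>
    filter_upwards [ih] with i ⟨ψ, hψ⟩
    exact ⟨ψ.all, by simp only [LHom.onBoundedFormula, hψ]⟩

theorem isEC_of_forall_isEC_reduct [l.NeBot]
    (hF : ∀ k (f : L.Functions k), ∀ᶠ i in l, f ∈ Set.range ((incl i).onFunction (n := k)))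
    (hR : ∀ k (r : L.Relations k), ∀ᶠ i in l, r ∈ Set.range ((incl i).onRelation (n := k)))
    {T : L.Theory} {Tn : ∀ i, (Ln i).Theory}
    (hTn : ∀ i, Tn i = {σ : (Ln i).Sentence | (incl i).onSentence σ ∈ T})
    {M : Type w} {SM : L.Structure M} (h : ∀ i, IsEC (Tn i) M ((incl i).reduct M)) :
    IsEC T M SM := by
  let := SM
  refine ⟨⟨fun σ hσ => ?_⟩, fun N SN hN f m k φ hφ a ⟨b, hb⟩ => ?_⟩
  · obtain ⟨i, τ, rfl⟩ := (eventually_mem_range_onBoundedFormula hF hR σ).exists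
    let := (incl i).reduct M
    have hτ : τ ∈ Tn i := by rw [hTn i]; exact hσ
    exact ((incl i).realize_onSentence M τ).mpr ((h i).1.realize_of_mem τ hτ)
  · obtain ⟨i, ψ, rfl⟩ := (eventually_mem_range_onBoundedFormula hF hR φ).exists
    let := SN; let := (incl i).reduct N; let := (incl i).reduct M
    obtain ⟨c, hc⟩ := (h i).2 N _ (modelsTheory_reduct (hTn i).subset hN)
      (reductEmbedding (incl i) f) m k ψ ((isQF_onBoundedFormula_iff (incl i)).mp hφ) a
      ⟨b, ((incl i).realize_onBoundedFormula ψ).mp hb⟩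
    exact ⟨c, ((incl i).realize_onBoundedFormula ψ).mpr hc⟩

end Union

section Chain

variable {L : FirstOrder.Language.{u, v}} {Ln : ℕ → FirstOrder.Language.{u, v}}
  {incl : ∀ n, Ln n →ᴸ L} {step : ∀ n, Ln n →ᴸ Ln (n + 1)}

theorem exists_comp_eq_of_le (hstep : ∀ n, (incl (n + 1)).comp (step n) = incl n) {a b : ℕ}
    (hab : a ≤ b) : ∃ ρ : Ln a →ᴸ Ln b, (incl b).comp ρ = incl a := by
  induction b, hab using Nat.le_induction with
  | base => exact ⟨LHom.id _, LHom.comp_id _⟩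
  | succ b _ ih =>
    obtain ⟨ρ, hρ⟩ := ih
    exact ⟨(step b).comp ρ, by rw [← LHom.comp_assoc, hstep, hρ]⟩

theorem eventually_mem_range_onFunction (hstep : ∀ n, (incl (n + 1)).comp (step n) = incl n)
    (hunion : ∀ (k : ℕ) (f : L.Functions k), ∃ n g, (incl n).onFunction g = f)
    (k : ℕ) (f : L.Functions k) : ∀ᶠ n in atTop, f ∈ Set.range ((incl n).onFunction (n := k)) := by
  obtain ⟨a, g, rfl⟩ := hunion k f
  filter_upwards [eventually_ge_atTop a] with b hab
  obtain ⟨ρ, hρ⟩ := exists_comp_eq_of_le hstep hab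
  exact ⟨ρ.onFunction g, by rw [← hρ]; rfl⟩

theorem eventually_mem_range_onRelation (hstep : ∀ n, (incl (n + 1)).comp (step n) = incl n)
    (hunion : ∀ (k : ℕ) (r : L.Relations k), ∃ n s, (incl n).onRelation s = r)
    (k : ℕ) (r : L.Relations k) : ∀ᶠ n in atTop, r ∈ Set.range ((incl n).onRelation (n := k)) := by
  obtain ⟨a, s, rfl⟩ := hunion k r
  filter_upwards [eventually_ge_atTop a] with b hab
  obtain ⟨ρ, hρ⟩ := exists_comp_eq_of_le hstep hab
  exact ⟨ρ.onRelation s, by rw [← hρ]; rfl⟩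

end Chain

theorem stmt17_general {L : FirstOrder.Language.{u, v}} (Ln : ℕ → FirstOrder.Language.{u, v})
    (incl : ∀ n, Ln n →ᴸ L)
    (step : ∀ n, Ln n →ᴸ Ln (n + 1))
    (hstep : ∀ n, ((incl (n + 1)).comp (step n)) = incl n)
    (hunionF : ∀ (k : ℕ) (f : L.Functions k), ∃ n g, (incl n).onFunction g = f)
    (hunionR : ∀ (k : ℕ) (r : L.Relations k), ∃ n s, (incl n).onRelation s = r)
    (T : L.Theory) (Tn : ∀ n, (Ln n).Theory)
    (hTn : ∀ n, Tn n = {σ : (Ln n).Sentence | (incl n).onSentence σ ∈ T})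
    (hrel : ∀ n, RelExpansion.{u, v, w} (incl n) (Tn n) T)
    (hec : ∀ n, ECClosedUnderUltraproducts.{u, v, w} (Tn n)) :
    ECClosedUnderUltraproducts.{u, v, w} T := by
  intro ι uu Ms SMs hMs
  -- the `Lₙ`-reduct of the ultraproduct is, definitionally, the ultraproduct of the reducts
  exact isEC_of_forall_isEC_reduct (eventually_mem_range_onFunction hstep hunionF)
    (eventually_mem_range_onRelation hstep hunionR) hTn fun n =>
      hec n ι uu Ms _ fun i => isEC_reduct (hTn n).subset (hrel n) (hMs i)

/-- Let `L` be the union of an increasing sequence `(Lₙ)` of sublanguages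
(the inclusions `inclₙ : Lₙ →ᴸ L` are injective, factor through each other compatibly, and
every symbol of `L` lies in some `Lₙ`), let `T` be an `L`-theory and `Tₙ = T|Lₙ`.  If for
every `n` the pair `(Tₙ, T)` has the relative expansion property and the class of
existentially closed models of `Tₙ` is closed under ultraproducts, then the class of
existentially closed models of `T` is closed under ultraproducts. -/
theorem stmt17 {L : FirstOrder.Language.{u, v}} (Ln : ℕ → FirstOrder.Language.{u, v})
    (incl : ∀ n, Ln n →ᴸ L) (hinj : ∀ n, (incl n).Injective)
    (step : ∀ n, Ln n →ᴸ Ln (n + 1))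
    (hstep : ∀ n, ((incl (n + 1)).comp (step n)) = incl n)
    (hunionF : ∀ (k : ℕ) (f : L.Functions k), ∃ n g, (incl n).onFunction g = f)
    (hunionR : ∀ (k : ℕ) (r : L.Relations k), ∃ n s, (incl n).onRelation s = r)
    (T : L.Theory) (Tn : ∀ n, (Ln n).Theory)
    (hTn : ∀ n, Tn n = {σ : (Ln n).Sentence | (incl n).onSentence σ ∈ T})
    (hrel : ∀ n, RelExpansion.{u, v, w} (incl n) (Tn n) T)
    (hec : ∀ n, ECClosedUnderUltraproducts.{u, v, w} (Tn n)) :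
    ECClosedUnderUltraproducts.{u, v, w} T :=
  stmt17_general Ln incl step hstep hunionF hunionR T Tn hTn hrel hec

end Stmt17
end
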